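/- arXiv:2009.12667 — 2 statements merged into one kernel-verified Lean document; each statement's English description precedes it below -/
import Mathlib

section
/- Form the full block matrix ℍ with observed–observed part H_oo, observed–hidden part H_oh, hidden–observed part H_ho and zero hidden–hidden part, and let D be block diagonal with parts D_o and D_h. Set J := (I−ℍ)^* D (I−ℍ), partitioned into blocks J_oo, J_oh, J_ho, J_hh according to O and Hid. Then: (a) J_oo = Γ + Δ, J_hh = Λ, J_ho = −Ψ, and J_oh = −Ψ^*; (b) if Λ is invertible, then J_oo − J_oh·J_hh^{−1}·J_ho = Γ + Δ + Σ; and (c) if in addition J is invertible with inverse Φ (partitioned into Φ_oo, Φ_oh, Φ_ho, Φ_hh) and Φ_oo is invertible, then Φ_oo^{−1} = J_oo − J_oh·J_hh^{−1}·J_ho = Γ + Δ + Σ. -/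
open Matrix ComplexOrder

/-- The block matrix with `(i,j)` block `H i j` (blocks of size `T × T`). -/
def ofBlocks {T : ℕ} {α β : Type*} (H : α → β → Matrix (Fin T) (Fin T) ℂ) :
    Matrix (α × Fin T) (β × Fin T) ℂ :=
  Matrix.of fun p q => H p.1 q.1 p.2 q.2

/-- The block-diagonal matrix with diagonal blocks `D i`. -/
def blkDiag {T : ℕ} {α : Type*} [DecidableEq α] (D : α → Matrix (Fin T) (Fin T) ℂ) :
    Matrix (α × Fin T) (α × Fin T) ℂ :=
  Matrix.of fun p q => if p.1 = q.1 then D p.1 p.2 q.2 else 0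

/-- The `(i,j)` block (of size `T × T`) of a block matrix. -/
def blk {T : ℕ} {α β : Type*} (A : Matrix (α × Fin T) (β × Fin T) ℂ) (i : α) (j : β) :
    Matrix (Fin T) (Fin T) ℂ :=
  Matrix.of fun a b => A (i, a) (j, b)

section Defs

variable {T : ℕ} {O Hid : Type*} [Fintype O] [Fintype Hid] [DecidableEq O] [DecidableEq Hid]

/-- `Γ = (I − H_oo)ᴴ D_o (I − H_oo)`. -/
noncomputable def GammaM (Hoo : O → O → Matrix (Fin T) (Fin T) ℂ)
    (Do : O → Matrix (Fin T) (Fin T) ℂ) :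
    Matrix (O × Fin T) (O × Fin T) ℂ :=
  (1 - ofBlocks Hoo)ᴴ * blkDiag Do * (1 - ofBlocks Hoo)

/-- `Δ = H_hoᴴ D_h H_ho`. -/
noncomputable def DeltaM (Hho : Hid → O → Matrix (Fin T) (Fin T) ℂ)
    (Dh : Hid → Matrix (Fin T) (Fin T) ℂ) :
    Matrix (O × Fin T) (O × Fin T) ℂ :=
  (ofBlocks Hho)ᴴ * blkDiag Dh * ofBlocks Hho

/-- `Λ = H_ohᴴ D_o H_oh + D_h`. -/
noncomputable def LambdaM (Hoh : O → Hid → Matrix (Fin T) (Fin T) ℂ)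
    (Do : O → Matrix (Fin T) (Fin T) ℂ) (Dh : Hid → Matrix (Fin T) (Fin T) ℂ) :
    Matrix (Hid × Fin T) (Hid × Fin T) ℂ :=
  (ofBlocks Hoh)ᴴ * blkDiag Do * ofBlocks Hoh + blkDiag Dh

/-- `Ψ = H_ohᴴ D_o (I − H_oo) + D_h H_ho`. -/
noncomputable def PsiM (Hoo : O → O → Matrix (Fin T) (Fin T) ℂ)
    (Hoh : O → Hid → Matrix (Fin T) (Fin T) ℂ)
    (Hho : Hid → O → Matrix (Fin T) (Fin T) ℂ)
    (Do : O → Matrix (Fin T) (Fin T) ℂ) (Dh : Hid → Matrix (Fin T) (Fin T) ℂ) :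
    Matrix (Hid × Fin T) (O × Fin T) ℂ :=
  (ofBlocks Hoh)ᴴ * blkDiag Do * (1 - ofBlocks Hoo) + blkDiag Dh * ofBlocks Hho

/-- `Σ = −Ψᴴ Λ⁻¹ Ψ`. -/
noncomputable def SigmaM (Hoo : O → O → Matrix (Fin T) (Fin T) ℂ)
    (Hoh : O → Hid → Matrix (Fin T) (Fin T) ℂ)
    (Hho : Hid → O → Matrix (Fin T) (Fin T) ℂ)
    (Do : O → Matrix (Fin T) (Fin T) ℂ) (Dh : Hid → Matrix (Fin T) (Fin T) ℂ) :
    Matrix (O × Fin T) (O × Fin T) ℂ :=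
  -((PsiM Hoo Hoh Hho Do Dh)ᴴ * (LambdaM Hoh Do Dh)⁻¹ * PsiM Hoo Hoh Hho Do Dh)

end Defs

lemma blkDiag_isHermitian {T : ℕ} {α : Type*} [DecidableEq α]
    {D : α → Matrix (Fin T) (Fin T) ℂ} (hD : ∀ i, (D i).IsHermitian) :
    (blkDiag D).IsHermitian := by
  ext ⟨i, a⟩ ⟨j, b⟩
  simp only [blkDiag, conjTranspose_apply, Matrix.of_apply]
  by_cases h : i = j
  · subst h; simp [← conjTranspose_apply, (hD i).eq]
  · simp [h, Ne.symm h]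

lemma aux_inv_toBlocks₁₁ {l m : Type*} [Fintype l] [Fintype m] [DecidableEq l] [DecidableEq m]
    (A : Matrix l l ℂ) (B : Matrix l m ℂ) (C : Matrix m l ℂ) (D : Matrix m m ℂ)
    [Invertible D] [Invertible (Matrix.fromBlocks A B C D)] :
    ((Matrix.fromBlocks A B C D)⁻¹).toBlocks₁₁ = (A - B * D⁻¹ * C)⁻¹ ∧
      IsUnit (A - B * D⁻¹ * C) := by
  haveI : Invertible (A - B * ⅟D * C) := Matrix.invertibleOfFromBlocks₂₂Invertible A B C D
  have hS : A - B * D⁻¹ * C = A - B * ⅟D * C := by rw [invOf_eq_nonsing_inv]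
  constructor
  · rw [← invOf_eq_nonsing_inv (Matrix.fromBlocks A B C D), Matrix.invOf_fromBlocks₂₂_eq,
      Matrix.toBlocks_fromBlocks₁₁, hS, invOf_eq_nonsing_inv]
  · rw [hS]; exact isUnit_of_invertible _

/-- Decomposition of the inverse power spectral density under partial
observability: the blocks of `J = (I − ℍ)ᴴ D (I − ℍ)` are `Γ + Δ`, `Λ`, `−Ψ`,
`−Ψᴴ`; the Schur complement of `J_hh` in `J` is `Γ + Δ + Σ`; and when `J` is
invertible with inverse `Φ` whose observed block is invertible,
`Φ_oo⁻¹ = Γ + Δ + Σ`. -/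
theorem psd_partial_observability_decomposition {T : ℕ} {O Hid : Type*}
    [Fintype O] [Fintype Hid] [DecidableEq O] [DecidableEq Hid]
    (Hoo : O → O → Matrix (Fin T) (Fin T) ℂ)
    (hHoo : ∀ i, Hoo i i = 0)
    (Hoh : O → Hid → Matrix (Fin T) (Fin T) ℂ)
    (Hho : Hid → O → Matrix (Fin T) (Fin T) ℂ)
    (Do : O → Matrix (Fin T) (Fin T) ℂ) (Dh : Hid → Matrix (Fin T) (Fin T) ℂ)
    (hDo : ∀ i, (Do i).IsHermitian) (hDh : ∀ l, (Dh l).IsHermitian)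
    (ℍ : Matrix ((O × Fin T) ⊕ (Hid × Fin T)) ((O × Fin T) ⊕ (Hid × Fin T)) ℂ)
    (hℍ : ℍ = Matrix.fromBlocks (ofBlocks Hoo) (ofBlocks Hoh) (ofBlocks Hho) 0)
    (D : Matrix ((O × Fin T) ⊕ (Hid × Fin T)) ((O × Fin T) ⊕ (Hid × Fin T)) ℂ)
    (hD : D = Matrix.fromBlocks (blkDiag Do) 0 0 (blkDiag Dh))
    (J : Matrix ((O × Fin T) ⊕ (Hid × Fin T)) ((O × Fin T) ⊕ (Hid × Fin T)) ℂ)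
    (hJ : J = (1 - ℍ)ᴴ * D * (1 - ℍ)) :
    (J.toBlocks₁₁ = GammaM Hoo Do + DeltaM Hho Dh ∧
     J.toBlocks₂₂ = LambdaM Hoh Do Dh ∧
     J.toBlocks₂₁ = -(PsiM Hoo Hoh Hho Do Dh) ∧
     J.toBlocks₁₂ = -(PsiM Hoo Hoh Hho Do Dh)ᴴ) ∧
    (IsUnit (LambdaM Hoh Do Dh) →
      J.toBlocks₁₁ - J.toBlocks₁₂ * (J.toBlocks₂₂)⁻¹ * J.toBlocks₂₁ =
        GammaM Hoo Do + DeltaM Hho Dh + SigmaM Hoo Hoh Hho Do Dh) ∧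
    (IsUnit (LambdaM Hoh Do Dh) → IsUnit J → IsUnit ((J⁻¹).toBlocks₁₁) →
      ((J⁻¹).toBlocks₁₁)⁻¹ =
        GammaM Hoo Do + DeltaM Hho Dh + SigmaM Hoo Hoh Hho Do Dh) := by
  have hDoH : (blkDiag Do).IsHermitian := blkDiag_isHermitian hDo
  have hDhH : (blkDiag Dh).IsHermitian := blkDiag_isHermitian hDh
  have h1 : (1 - ℍ) = Matrix.fromBlocks (1 - ofBlocks Hoo) (-(ofBlocks Hoh))
      (-(ofBlocks Hho)) 1 := by
    rw [hℍ, ← Matrix.fromBlocks_one]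
    ext (i | i) (j | j) <;> simp [Matrix.fromBlocks]
  have hJb : J = Matrix.fromBlocks
      (GammaM Hoo Do + DeltaM Hho Dh)
      (-(PsiM Hoo Hoh Hho Do Dh)ᴴ)
      (-(PsiM Hoo Hoh Hho Do Dh))
      (LambdaM Hoh Do Dh) := by
    rw [hJ, h1, hD, Matrix.fromBlocks_conjTranspose, Matrix.fromBlocks_multiply,
      Matrix.fromBlocks_multiply]
    rw [Matrix.fromBlocks_inj]
    refine ⟨?_, ?_, ?_, ?_⟩
    · simp [GammaM, DeltaM, Matrix.mul_assoc]
    · simp [PsiM, conjTranspose_add, conjTranspose_mul, hDoH.eq, hDhH.eq,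
        Matrix.mul_assoc, add_comm]
    · simp [PsiM, Matrix.mul_assoc, add_comm]
    · simp [LambdaM, Matrix.mul_assoc]
  have ha : J.toBlocks₁₁ = GammaM Hoo Do + DeltaM Hho Dh ∧
      J.toBlocks₂₂ = LambdaM Hoh Do Dh ∧
      J.toBlocks₂₁ = -(PsiM Hoo Hoh Hho Do Dh) ∧
      J.toBlocks₁₂ = -(PsiM Hoo Hoh Hho Do Dh)ᴴ := by
    rw [hJb]
    exact ⟨rfl, rfl, rfl, rfl⟩
  obtain ⟨h11, h22, h21, h12⟩ := ha
  have hSc : (GammaM Hoo Do + DeltaM Hho Dh) -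
      (-(PsiM Hoo Hoh Hho Do Dh)ᴴ) * (LambdaM Hoh Do Dh)⁻¹ * (-(PsiM Hoo Hoh Hho Do Dh)) =
      GammaM Hoo Do + DeltaM Hho Dh + SigmaM Hoo Hoh Hho Do Dh := by
    rw [SigmaM]
    simp [Matrix.neg_mul, Matrix.mul_neg, sub_eq_add_neg]
  have hb : J.toBlocks₁₁ - J.toBlocks₁₂ * (J.toBlocks₂₂)⁻¹ * J.toBlocks₂₁ =
      GammaM Hoo Do + DeltaM Hho Dh + SigmaM Hoo Hoh Hho Do Dh := by
    rw [h11, h22, h21, h12]; exact hSc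
  refine ⟨⟨h11, h22, h21, h12⟩, fun _ => hb, fun hΛ hJu _ => ?_⟩
  haveI : Invertible (LambdaM Hoh Do Dh) := hΛ.invertible
  haveI : Invertible (Matrix.fromBlocks
      (GammaM Hoo Do + DeltaM Hho Dh)
      (-(PsiM Hoo Hoh Hho Do Dh)ᴴ)
      (-(PsiM Hoo Hoh Hho Do Dh))
      (LambdaM Hoh Do Dh)) := by
    rw [← hJb]; exact hJu.invertible
  obtain ⟨hkey, hS⟩ := aux_inv_toBlocks₁₁
      (GammaM Hoo Do + DeltaM Hho Dh)
      (-(PsiM Hoo Hoh Hho Do Dh)ᴴ)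
      (-(PsiM Hoo Hoh Hho Do Dh))
      (LambdaM Hoh Do Dh)
  rw [hSc] at hkey hS
  rw [hJb, hkey]
  exact Matrix.nonsing_inv_nonsing_inv _ ((Matrix.isUnit_iff_isUnit_det _).mp hS)
end

section
/- Let i, j ∈ O be observed vertices. If the (i,j) block of Γ + Δ + Σ is nonzero, then the graph distance between i and j in G is at most 4. (Equivalently: if dist_G(i,j) > 4, then the (i,j) block of Γ + Δ + Σ is the zero T×T matrix.) -/
open Matrix ComplexOrder

section Aux

variable {T : ℕ}

lemma blk_mul {α β γ : Type*} [Fintype β] (A : Matrix (α × Fin T) (β × Fin T) ℂ)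
    (B : Matrix (β × Fin T) (γ × Fin T) ℂ) (i : α) (j : γ) :
    blk (A * B) i j = ∑ k : β, blk A i k * blk B k j := by
  ext a b
  simp [blk, Matrix.mul_apply, Matrix.sum_apply, Fintype.sum_prod_type]

lemma blk_mul_eq_zero {α β γ : Type*} [Fintype β] {A : Matrix (α × Fin T) (β × Fin T) ℂ}
    {B : Matrix (β × Fin T) (γ × Fin T) ℂ} {i : α} {j : γ}
    (h : ∀ k, blk A i k = 0 ∨ blk B k j = 0) : blk (A * B) i j = 0 := by
  rw [blk_mul]
  refine Finset.sum_eq_zero fun k _ => ?_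
  rcases h k with h | h <;> simp [h]

lemma blk_mul_ne_zero {α β γ : Type*} [Fintype β] {A : Matrix (α × Fin T) (β × Fin T) ℂ}
    {B : Matrix (β × Fin T) (γ × Fin T) ℂ} {i : α} {j : γ}
    (h : blk (A * B) i j ≠ 0) : ∃ k, blk A i k ≠ 0 ∧ blk B k j ≠ 0 := by
  by_contra hc
  push_neg at hc
  exact h (blk_mul_eq_zero fun k => by
    by_cases h1 : blk A i k = 0
    · exact Or.inl h1
    · exact Or.inr (hc k h1))

lemma blk_add {α β : Type*} (A B : Matrix (α × Fin T) (β × Fin T) ℂ) (i : α) (j : β) :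
    blk (A + B) i j = blk A i j + blk B i j := rfl

lemma blk_neg {α β : Type*} (A : Matrix (α × Fin T) (β × Fin T) ℂ) (i : α) (j : β) :
    blk (-A) i j = -blk A i j := rfl

lemma blk_conjTranspose {α β : Type*} (A : Matrix (α × Fin T) (β × Fin T) ℂ) (i : β) (j : α) :
    blk Aᴴ i j = (blk A j i)ᴴ := rfl

lemma blk_ofBlocks {α β : Type*} (H : α → β → Matrix (Fin T) (Fin T) ℂ) (i : α) (j : β) :
    blk (ofBlocks H) i j = H i j := rfl

lemma blk_blkDiag {α : Type*} [DecidableEq α] (D : α → Matrix (Fin T) (Fin T) ℂ) (i j : α) :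
    blk (blkDiag D) i j = if i = j then D i else 0 := by
  ext a b
  by_cases h : i = j <;> simp [blk, blkDiag, h]

lemma blk_blkDiag_ne {α : Type*} [DecidableEq α] (D : α → Matrix (Fin T) (Fin T) ℂ) {i j : α}
    (h : i ≠ j) : blk (blkDiag D) i j = 0 := by
  rw [blk_blkDiag, if_neg h]

lemma blk_one {α : Type*} [DecidableEq α] (i j : α) :
    blk (1 : Matrix (α × Fin T) (α × Fin T) ℂ) i j = if i = j then 1 else 0 := by
  ext a b
  by_cases h : i = j <;>
    simp [blk, Matrix.one_apply, Prod.ext_iff, h]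

lemma blk_sub {α β : Type*} (A B : Matrix (α × Fin T) (β × Fin T) ℂ) (i : α) (j : β) :
    blk (A - B) i j = blk A i j - blk B i j := rfl

/-- A block matrix whose off-diagonal blocks vanish has an inverse with the same property. -/
lemma blk_inv_eq_zero {α : Type*} [Fintype α] [DecidableEq α]
    {M : Matrix (α × Fin T) (α × Fin T) ℂ} (hM : IsUnit M)
    (hoff : ∀ i j : α, i ≠ j → blk M i j = 0) {i j : α} (hij : i ≠ j) :
    blk M⁻¹ i j = 0 := by
  set Dblk : α → Matrix (Fin T) (Fin T) ℂ := fun l => blk M l l with hD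
  set e : α × Fin T ≃ Fin T × α := Equiv.prodComm _ _ with he
  have hMeq : M = (Matrix.blockDiagonal Dblk).submatrix e e := by
    ext ⟨l, a⟩ ⟨l', b⟩
    by_cases h : l = l'
    · subst h
      simp [Matrix.blockDiagonal_apply, he, Dblk, blk]
    · have := hoff l l' h
      have h0 : M (l, a) (l', b) = 0 := by
        have := congrFun (congrFun this a) b
        simpa [blk] using this
      simp [Matrix.blockDiagonal_apply, he, h, h0]
  have hdet : IsUnit (Matrix.blockDiagonal Dblk).det := by
    have := hM.map (Matrix.detMonoidHom (n := α × Fin T) (R := ℂ))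
    rw [hMeq] at this
    simpa [Matrix.det_submatrix_equiv_self] using this
  have hdetl : ∀ l : α, IsUnit (Dblk l).det := by
    intro l
    rw [Matrix.det_blockDiagonal, isUnit_iff_ne_zero, Finset.prod_ne_zero_iff] at hdet
    exact isUnit_iff_ne_zero.mpr (hdet l (Finset.mem_univ l))
  have hinvBD : (Matrix.blockDiagonal Dblk)⁻¹
      = Matrix.blockDiagonal fun l => (Dblk l)⁻¹ := by
    apply Matrix.inv_eq_right_inv
    rw [← Matrix.blockDiagonal_mul]
    have : (fun k => Dblk k * (Dblk k)⁻¹) = fun _ => (1 : Matrix (Fin T) (Fin T) ℂ) := by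
      funext k
      exact Matrix.mul_nonsing_inv _ (hdetl k)
    rw [this]
    simp [← Pi.one_def, Matrix.blockDiagonal_one]
  have hMinv : M⁻¹ = ((Matrix.blockDiagonal fun l => (Dblk l)⁻¹).submatrix e e) := by
    rw [hMeq, Matrix.inv_submatrix_equiv, hinvBD]
  ext a b
  rw [hMinv]
  simp [blk, Matrix.blockDiagonal_apply, he, hij]

end Aux

/-- Under partial observability, a nonzero `(i,j)` block of `Γ + Δ + Σ` forces
the observed vertices `i` and `j` to be within four hops of each other in the
graph `G`. -/
theorem nonzero_block_implies_within_four_hops {T : ℕ} {V : Type*}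
    [Fintype V] [DecidableEq V]
    (G : SimpleGraph V) (hG : G.Connected)
    (HidS : Set V) [DecidablePred (· ∈ HidS)]
    (hHid4 : ∀ l₁ ∈ HidS, ∀ l₂ ∈ HidS, l₁ ≠ l₂ → 4 ≤ G.dist l₁ l₂)
    (hT : 0 < T)
    (H : V → V → Matrix (Fin T) (Fin T) ℂ)
    (hH : ∀ a b : V, (a = b ∨ ¬ G.Adj a b) → H a b = 0)
    (Do : {v : V // v ∉ HidS} → Matrix (Fin T) (Fin T) ℂ)
    (Dh : {v : V // v ∈ HidS} → Matrix (Fin T) (Fin T) ℂ)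
    (hDo : ∀ i, (Do i).IsHermitian) (hDh : ∀ l, (Dh l).IsHermitian)
    (hΛunit : IsUnit (LambdaM (fun (i : {v : V // v ∉ HidS}) (l : {v : V // v ∈ HidS}) => H i.1 l.1) Do Dh))
    (i j : {v : V // v ∉ HidS})
    (hne : blk (GammaM (fun (a b : {v : V // v ∉ HidS}) => H a.1 b.1) Do
            + DeltaM (fun (l : {v : V // v ∈ HidS}) (a : {v : V // v ∉ HidS}) => H l.1 a.1) Dh
            + SigmaM (fun (a b : {v : V // v ∉ HidS}) => H a.1 b.1)
                (fun (a : {v : V // v ∉ HidS}) (l : {v : V // v ∈ HidS}) => H a.1 l.1)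
                (fun (l : {v : V // v ∈ HidS}) (a : {v : V // v ∉ HidS}) => H l.1 a.1)
                Do Dh) i j ≠ 0) :
    G.dist i.1 j.1 ≤ 4 := by
  classical
  by_contra hdist
  push_neg at hdist
  apply hne
  -- notation
  set Hoo := fun (a b : {v : V // v ∉ HidS}) => H a.1 b.1 with hHoo
  set Hoh := fun (a : {v : V // v ∉ HidS}) (l : {v : V // v ∈ HidS}) => H a.1 l.1 with hHoh
  set Hho := fun (l : {v : V // v ∈ HidS}) (a : {v : V // v ∉ HidS}) => H l.1 a.1 with hHho
  have hadj : ∀ a b : V, H a b ≠ 0 → G.dist a b ≤ 1 := by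
    intro a b hab
    have : G.Adj a b := by
      by_contra hA
      exact hab (hH a b (Or.inr hA))
    calc G.dist a b ≤ this.toWalk.length := SimpleGraph.dist_le _
      _ = 1 := by simp
  have hself : ∀ a : V, G.dist a a = 0 := fun a => SimpleGraph.dist_self
  -- support of `1 - ofBlocks Hoo`
  have hA : ∀ k m : {v : V // v ∉ HidS}, blk (1 - ofBlocks Hoo) k m ≠ 0 →
      G.dist k.1 m.1 ≤ 1 := by
    intro k m h
    rw [blk_sub, blk_one, blk_ofBlocks] at h
    by_cases hkm : k = m
    · subst hkm; simp [hself k]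
    · rw [if_neg hkm, zero_sub, neg_ne_zero] at h
      exact hadj _ _ h
  -- support of `(ofBlocks X)ᴴ * blkDiag D` products
  have hΨ : ∀ (l : {v : V // v ∈ HidS}) (m : {v : V // v ∉ HidS}),
      blk (PsiM Hoo Hoh Hho Do Dh) l m ≠ 0 → G.dist l.1 m.1 ≤ 2 := by
    intro l m h
    rw [PsiM, blk_add] at h
    have hor : blk ((ofBlocks Hoh)ᴴ * blkDiag Do * (1 - ofBlocks Hoo)) l m ≠ 0 ∨
        blk (blkDiag Dh * ofBlocks Hho) l m ≠ 0 := by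
      by_contra hc
      push_neg at hc
      rw [hc.1, hc.2] at h
      simp at h
    rcases hor with h1 | h1
    · obtain ⟨k, hk1, hk2⟩ := blk_mul_ne_zero h1
      obtain ⟨k', hk1', hk2'⟩ := blk_mul_ne_zero hk1
      have hkk : k' = k := by
        by_contra hne'
        rw [blk_blkDiag_ne Do hne'] at hk2'
        exact hk2' rfl
      subst hkk
      rw [blk_conjTranspose, blk_ofBlocks] at hk1'
      have hH1 : H k'.1 l.1 ≠ 0 := fun h0 => hk1' (by rw [hHoh]; simp [h0])
      have d1 : G.dist l.1 k'.1 ≤ 1 := by rw [SimpleGraph.dist_comm]; exact hadj _ _ hH1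
      have d2 : G.dist k'.1 m.1 ≤ 1 := hA _ _ hk2
      calc G.dist l.1 m.1 ≤ G.dist l.1 k'.1 + G.dist k'.1 m.1 :=
          hG.dist_triangle (v := k'.1)
        _ ≤ 2 := by omega
    · obtain ⟨l', hl1, hl2⟩ := blk_mul_ne_zero h1
      have hll : l = l' := by
        by_contra hne'
        rw [blk_blkDiag_ne Dh hne'] at hl1
        exact hl1 rfl
      subst hll
      rw [blk_ofBlocks] at hl2
      have : G.dist l.1 m.1 ≤ 1 := hadj _ _ (fun h0 => hl2 (by rw [hHho]; simp [h0]))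
      omega
  -- Λ has vanishing off-diagonal blocks
  have hΛoff : ∀ l l' : {v : V // v ∈ HidS}, l ≠ l' →
      blk (LambdaM Hoh Do Dh) l l' = 0 := by
    intro l l' hll
    rw [LambdaM, blk_add, blk_blkDiag_ne Dh hll, add_zero]
    apply blk_mul_eq_zero
    intro k
    by_contra hc
    push_neg at hc
    obtain ⟨h1, h2⟩ := hc
    obtain ⟨k', hk1', hk2'⟩ := blk_mul_ne_zero h1
    have hkk : k' = k := by
      by_contra hne'
      rw [blk_blkDiag_ne Do hne'] at hk2'
      exact hk2' rfl
    subst hkk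
    rw [blk_conjTranspose, blk_ofBlocks] at hk1'
    rw [blk_ofBlocks] at h2
    have hH1 : H k'.1 l.1 ≠ 0 := fun h0 => hk1' (by rw [hHoh]; simp [h0])
    have hH2 : H k'.1 l'.1 ≠ 0 := fun h0 => h2 (by rw [hHoh]; simp [h0])
    have d1 : G.dist l.1 k'.1 ≤ 1 := by rw [SimpleGraph.dist_comm]; exact hadj _ _ hH1
    have d2 : G.dist k'.1 l'.1 ≤ 1 := hadj _ _ hH2
    have hd : G.dist l.1 l'.1 ≤ 2 :=
      le_trans (hG.dist_triangle (v := k'.1)) (by omega)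
    have h4 : 4 ≤ G.dist l.1 l'.1 :=
      hHid4 l.1 l.2 l'.1 l'.2 (fun h => hll (Subtype.ext h))
    omega
  -- Λ⁻¹ has vanishing off-diagonal blocks
  have hΛinv : ∀ l l' : {v : V // v ∈ HidS}, l ≠ l' →
      blk (LambdaM Hoh Do Dh)⁻¹ l l' = 0 :=
    fun l l' h => blk_inv_eq_zero hΛunit hΛoff h
  -- the three blocks vanish
  have hΓ : blk (GammaM Hoo Do) i j = 0 := by
    rw [GammaM]
    apply blk_mul_eq_zero
    intro k
    by_contra hc
    push_neg at hc
    obtain ⟨h1, h2⟩ := hc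
    obtain ⟨k', hk1', hk2'⟩ := blk_mul_ne_zero h1
    have hkk : k' = k := by
      by_contra hne'
      rw [blk_blkDiag_ne Do hne'] at hk2'
      exact hk2' rfl
    subst hkk
    rw [blk_conjTranspose] at hk1'
    have hA1 : blk (1 - ofBlocks Hoo) k' i ≠ 0 := fun h0 => hk1' (by rw [h0]; simp)
    have d1 : G.dist i.1 k'.1 ≤ 1 := by rw [SimpleGraph.dist_comm]; exact hA _ _ hA1
    have d2 : G.dist k'.1 j.1 ≤ 1 := hA _ _ h2
    have : G.dist i.1 j.1 ≤ 2 := le_trans (hG.dist_triangle (v := k'.1)) (by omega)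
    omega
  have hΔ : blk (DeltaM Hho Dh) i j = 0 := by
    rw [DeltaM]
    apply blk_mul_eq_zero
    intro l
    by_contra hc
    push_neg at hc
    obtain ⟨h1, h2⟩ := hc
    obtain ⟨l', hl1', hl2'⟩ := blk_mul_ne_zero h1
    have hll : l' = l := by
      by_contra hne'
      rw [blk_blkDiag_ne Dh hne'] at hl2'
      exact hl2' rfl
    subst hll
    rw [blk_conjTranspose, blk_ofBlocks] at hl1'
    rw [blk_ofBlocks] at h2
    have hH1 : H l'.1 i.1 ≠ 0 := fun h0 => hl1' (by rw [hHho]; simp [h0])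
    have hH2 : H l'.1 j.1 ≠ 0 := fun h0 => h2 (by rw [hHho]; simp [h0])
    have d1 : G.dist i.1 l'.1 ≤ 1 := by rw [SimpleGraph.dist_comm]; exact hadj _ _ hH1
    have d2 : G.dist l'.1 j.1 ≤ 1 := hadj _ _ hH2
    have : G.dist i.1 j.1 ≤ 2 := le_trans (hG.dist_triangle (v := l'.1)) (by omega)
    omega
  have hSig : blk (SigmaM Hoo Hoh Hho Do Dh) i j = 0 := by
    rw [SigmaM, blk_neg, neg_eq_zero]
    apply blk_mul_eq_zero
    intro l'
    by_contra hc
    push_neg at hc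
    obtain ⟨h1, h2⟩ := hc
    obtain ⟨l, hl1, hl2⟩ := blk_mul_ne_zero h1
    have hll : l = l' := by
      by_contra hne'
      exact hl2 (hΛinv l l' hne')
    subst hll
    rw [blk_conjTranspose] at hl1
    have hΨ1 : blk (PsiM Hoo Hoh Hho Do Dh) l i ≠ 0 := fun h0 => hl1 (by rw [h0]; simp)
    have d1 : G.dist i.1 l.1 ≤ 2 := by rw [SimpleGraph.dist_comm]; exact hΨ _ _ hΨ1
    have d2 : G.dist l.1 j.1 ≤ 2 := hΨ _ _ h2
    have : G.dist i.1 j.1 ≤ 4 := le_trans (hG.dist_triangle (v := l.1)) (by omega)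
    omega
  rw [blk_add, blk_add, hΓ, hΔ, hSig]
  simp
end
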